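/- Let F : ℝ^{dn} → ℝ ∪ {+∞} be proper, closed, convex with the growth condition ‖u*‖₂ ≤ C(‖u‖₂+1) for all u* ∈ ∂F(u). Then the sequences generated by the ADMM-like algorithm with geometrically increasing penalty η^{(k)} = η^{(0)}σ^k (σ > 1) converge: (u^{(k)}, v^{(k)}, w^{(k)}) → (û, û, û) for some û, and (q₁^{(k)}, q₂^{(k)}) → (0, 0). -/

import Mathlib

open Filter Topology

/-- Grouped ℓ⁰ semi-norm. -/
noncomputable def l0 {n d : ℕ} (w : Fin n → Fin d → ℝ) : ℝ :=
  Set.ncard {i : Fin n | w i ≠ 0}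

/-!
The ℓ⁰ penalty lies in `[0, λn]`, so comparing the `v`- and `w`-steps with the choice
`u⁽ᵏ⁺¹⁾ + qᵢ⁽ᵏ⁾` gives `‖qᵢ⁽ᵏ⁺¹⁾‖² ≤ 2λn / η⁽ᵏ⁾`: the multipliers decay geometrically.
The optimality condition of the `u`-step says that `-η⁽ᵏ⁾` times the sum of the two residuals
is a subgradient of `F` at `u⁽ᵏ⁺¹⁾`, so by the growth condition the residuals are
`O((‖u⁽ᵏ⁺¹⁾‖ + 1) / η⁽ᵏ⁾)`. Through the multiplier updates this bounds the increments
`‖u⁽ᵏ⁺²⁾ - u⁽ᵏ⁺¹⁾‖` by `aₖ (‖u⁽ᵏ⁺²⁾‖ + 1) + bₖ` with `a`, `b` summable; a discrete Grönwall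
argument then bounds `u`, so its increments are summable and `u` converges. The limits of `v`
and `w` are read off the multiplier updates.
-/

theorem nonpos_of_forall_le_mul {c M : ℝ} (h : ∀ t : ℝ, 0 < t → t ≤ 1 → c ≤ t * M) : c ≤ 0 := by
  have hlim : Tendsto (fun t : ℝ => t * M) (𝓝[>] 0) (𝓝 0) := by
    simpa using ((continuous_mul_const M).tendsto 0).mono_left nhdsWithin_le_nhds
  refine ge_of_tendsto hlim ?_
  filter_upwards [Ioo_mem_nhdsGT one_pos] with t ht using h t ht.1 ht.2.le

theorem summable_norm_of_sq_le_geometric {E : Type*} [SeminormedAddCommGroup E] {y : ℕ → E}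
    {A r : ℝ} (hr₀ : 0 ≤ r) (hr₁ : r < 1) (hy : ∀ k, ‖y k‖ ^ 2 ≤ A * r ^ k) :
    Summable (‖y ·‖) := by
  have hA : 0 ≤ A := by simpa using (sq_nonneg _).trans (hy 0)
  have hr : √r < 1 := (Real.sqrt_lt_sqrt hr₀ hr₁).trans_eq Real.sqrt_one
  refine Summable.of_nonneg_of_le (fun k => norm_nonneg _) (fun k => ?_)
    ((summable_geometric_of_lt_one (Real.sqrt_nonneg r) hr).mul_left √A)
  rw [← pow_le_pow_iff_left₀ (norm_nonneg _) (by positivity) two_ne_zero, mul_pow,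
    Real.sq_sqrt hA, ← pow_mul, mul_comm k, pow_mul, Real.sq_sqrt hr₀]
  exact hy k

theorem summable_inv_mul_pow (η₀ : ℝ) {σ : ℝ} (hσ : 1 < σ) :
    Summable fun k : ℕ => (η₀ * σ ^ k)⁻¹ := by
  simpa [mul_comm] using
    (summable_geometric_of_lt_one (by positivity) (inv_lt_one_of_one_lt₀ hσ)).mul_left η₀⁻¹

theorem cauchySeq_of_norm_sub_le_mul_norm_add {E : Type*} [SeminormedAddCommGroup E]
    {x : ℕ → E} {a b : ℕ → ℝ} (ha₀ : ∀ k, 0 ≤ a k) (hb₀ : ∀ k, 0 ≤ b k)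
    (ha : Summable a) (hb : Summable b)
    (hx : ∀ k, ‖x (k + 1) - x k‖ ≤ a k * (‖x (k + 1)‖ + 1) + b k) : CauchySeq x := by
  obtain ⟨k₀, ha_small⟩ : ∃ k₀, ∀ k ≥ k₀, a k ≤ 1 / 2 :=
    eventually_atTop.mp (ha.tendsto_atTop_zero.eventually_le_const one_half_pos)
  -- once `a k ≤ 1/2`, the implicit bound can be solved for the increment
  have hstep : ∀ k ≥ k₀, ‖x (k + 1) - x k‖ ≤ 2 * a k * (‖x k‖ + 1) + 2 * b k := by
    intro k hk
    have := norm_le_norm_add_norm_sub' (x (k + 1)) (x k)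
    nlinarith [hx k, ha_small k hk, ha₀ k, norm_nonneg (x (k + 1) - x k)]
  obtain ⟨M, hM⟩ : ∃ M, ∀ k ≥ k₀, ‖x k‖ + 1 ≤ M := by
    refine ⟨(‖x k₀‖ + 1 + ∑' k, 2 * b k) * Real.exp (∑' k, 2 * a k), fun k hk => ?_⟩
    have hgron := discrete_gronwall (u := fun k => ‖x k‖ + 1) (c := fun k => 2 * a k)
      (b := fun k => 2 * b k) (by positivity)
      (fun k hk => by
        have := norm_le_norm_add_norm_sub' (x (k + 1)) (x k)
        nlinarith [hstep k hk]) (fun k _ => by linarith [ha₀ k]) (fun k _ => by linarith [hb₀ k]) hk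
    refine hgron.trans ?_
    gcongr
    · exact add_nonneg (by positivity) (tsum_nonneg fun k => by linarith [hb₀ k])
    · exact (hb.mul_left 2).sum_le_tsum _ fun k _ => by linarith [hb₀ k]
    · exact (ha.mul_left 2).sum_le_tsum _ fun k _ => by linarith [ha₀ k]
  refine cauchySeq_of_summable_dist <|
    Summable.of_norm_bounded_eventually_nat ((ha.mul_left (2 * M)).add (hb.mul_left 2)) ?_
  filter_upwards [eventually_ge_atTop k₀] with k hk
  rw [Real.norm_of_nonneg dist_nonneg, dist_comm, dist_eq_norm]
  nlinarith [hstep k hk, hM k hk, ha₀ k]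

section Subgradient

variable {E : Type*} [NormedAddCommGroup E] [InnerProductSpace ℝ E]

def HasSubgradient (F : E → EReal) (x g : E) : Prop :=
  ∀ y, F x + ((inner ℝ g (y - x) : ℝ) : EReal) ≤ F y

theorem norm_add_smul_sq (r h : E) (t : ℝ) :
    ‖r + t • h‖ ^ 2 = ‖r‖ ^ 2 + 2 * t * inner ℝ r h + t ^ 2 * ‖h‖ ^ 2 := by
  rw [norm_add_sq_real, real_inner_smul_right, norm_smul, mul_pow, Real.norm_eq_abs, sq_abs]
  ring

theorem hasSubgradient_of_minimizes_add_sq {F : E → EReal} (hbot : ∀ x, F x ≠ ⊥)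
    (hproper : ∃ x, F x ≠ ⊤)
    (hconv : ∀ (x y : E) (t : ℝ), 0 ≤ t → t ≤ 1 →
      F (t • x + (1 - t) • y) ≤ ((t : EReal)) * F x + (((1 - t : ℝ) : EReal)) * F y)
    {c : ℝ} {u a b : E}
    (hmin : ∀ x, F u + ((c / 2 * (‖u - a‖ ^ 2 + ‖u - b‖ ^ 2) : ℝ) : EReal) ≤
      F x + ((c / 2 * (‖x - a‖ ^ 2 + ‖x - b‖ ^ 2) : ℝ) : EReal)) :
    HasSubgradient F u (-c • ((u - a) + (u - b))) := by
  obtain ⟨Fu, hFu⟩ : ∃ Fu : ℝ, F u = Fu := by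
    refine ⟨(F u).toReal, (EReal.coe_toReal ?_ (hbot u)).symm⟩
    obtain ⟨x₀, hx₀⟩ := hproper
    intro htop
    have := hmin x₀
    rw [htop, EReal.top_add_coe, ← EReal.coe_toReal hx₀ (hbot x₀), ← EReal.coe_add] at this
    exact (EReal.coe_lt_top _).not_ge this
  intro z
  obtain hz | ⟨Fz, hFz⟩ : F z = ⊤ ∨ ∃ Fz : ℝ, F z = Fz := by
    by_cases hz : F z = ⊤
    · exact .inl hz
    · exact .inr ⟨(F z).toReal, (EReal.coe_toReal hz (hbot z)).symm⟩
  · rw [hz]; exact le_top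
  set h := z - u
  rw [hFu, hFz, ← EReal.coe_add, EReal.coe_le_coe_iff, real_inner_smul_left, inner_add_left]
  -- along the segment from `u` to `z`, convexity of `F` and minimality give a first-order
  -- inequality up to an `O(t)` error coming from the quadratic term
  suffices Fu - Fz - c * (inner ℝ (u - a) h + inner ℝ (u - b) h) ≤ 0 by linear_combination this
  refine nonpos_of_forall_le_mul (M := c * ‖h‖ ^ 2) fun t ht₀ ht₁ => ?_
  have hseg : t • z + (1 - t) • u = u + t • h := by
    simp only [h, smul_sub, sub_smul, one_smul]; abel
  have hconv_t := hconv z u t ht₀.le ht₁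
  rw [hseg, hFz, hFu, ← EReal.coe_mul, ← EReal.coe_mul, ← EReal.coe_add] at hconv_t
  have hmin_t := (hmin (u + t • h)).trans (add_le_add hconv_t le_rfl)
  rw [hFu, ← EReal.coe_add, ← EReal.coe_add, EReal.coe_le_coe_iff,
    show u + t • h - a = (u - a) + t • h by abel, show u + t • h - b = (u - b) + t • h by abel,
    norm_add_smul_sq, norm_add_smul_sq] at hmin_t
  have : t * (Fu - Fz - c * (inner ℝ (u - a) h + inner ℝ (u - b) h)) ≤ t * (t * (c * ‖h‖ ^ 2)) := by
    linarith
  exact le_of_mul_le_mul_left this ht₀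

theorem mul_norm_add_le_of_minimizes_add_sq {F : E → EReal} (hbot : ∀ x, F x ≠ ⊥)
    (hproper : ∃ x, F x ≠ ⊤)
    (hconv : ∀ (x y : E) (t : ℝ), 0 ≤ t → t ≤ 1 →
      F (t • x + (1 - t) • y) ≤ ((t : EReal)) * F x + (((1 - t : ℝ) : EReal)) * F y)
    {C : ℝ} (hgrowth : ∀ x g, HasSubgradient F x g → ‖g‖ ≤ C * (‖x‖ + 1))
    {c : ℝ} (hc : 0 ≤ c) {u a b : E}
    (hmin : ∀ x, F u + ((c / 2 * (‖u - a‖ ^ 2 + ‖u - b‖ ^ 2) : ℝ) : EReal) ≤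
      F x + ((c / 2 * (‖x - a‖ ^ 2 + ‖x - b‖ ^ 2) : ℝ) : EReal)) :
    c * ‖(u - a) + (u - b)‖ ≤ C * (‖u‖ + 1) := by
  simpa only [norm_smul, norm_neg, Real.norm_of_nonneg hc] using
    hgrowth _ _ (hasSubgradient_of_minimizes_add_sq hbot hproper hconv hmin)

end Subgradient

theorem l0_nonneg {n d : ℕ} (w : Fin n → Fin d → ℝ) : 0 ≤ l0 w := Nat.cast_nonneg _

theorem l0_le {n d : ℕ} (w : Fin n → Fin d → ℝ) : l0 w ≤ n := by
  simpa [l0] using (Nat.cast_le (α := ℝ)).mpr (Set.ncard_le_card {i : Fin n | w i ≠ 0})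

theorem mul_sq_norm_le_of_minimizes_l0_add_sq {E : Type*} [NormedAddCommGroup E] {n d : ℕ}
    (D : E → Fin n → Fin d → ℝ) {lam c : ℝ} (hlam : 0 ≤ lam) {u v q : E}
    (hv : ∀ x, lam * l0 (D v) + c * ‖u - v + q‖ ^ 2 ≤ lam * l0 (D x) + c * ‖u - x + q‖ ^ 2) :
    c * ‖u - v + q‖ ^ 2 ≤ lam * n := by
  have h := hv (u + q)
  rw [show u - (u + q) + q = 0 by abel, norm_zero] at h
  nlinarith [mul_nonneg hlam (l0_nonneg (D v)), mul_le_mul_of_nonneg_left (l0_le (D (u + q))) hlam]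

theorem summable_norm_multiplier_of_minimizes_l0_add_sq {E : Type*} [NormedAddCommGroup E]
    {n d : ℕ} (D : E → Fin n → Fin d → ℝ) {lam η₀ σ : ℝ} (hlam : 0 ≤ lam) (hη₀ : 0 < η₀) (hσ : 1 < σ)
    {η : ℕ → ℝ} (hη : ∀ k, η k = η₀ * σ ^ k) {u v q : ℕ → E}
    (hv : ∀ k, ∀ x, lam * l0 (D (v (k + 1))) + η k / 2 * ‖u (k + 1) - v (k + 1) + q k‖ ^ 2 ≤
      lam * l0 (D x) + η k / 2 * ‖u (k + 1) - x + q k‖ ^ 2)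
    (hq : ∀ k, q (k + 1) = q k + u (k + 1) - v (k + 1)) :
    Summable (‖q ·‖) := by
  refine (summable_nat_add_iff 1).mp <| summable_norm_of_sq_le_geometric (A := 2 * lam * n / η₀)
    (inv_nonneg.mpr (by linarith)) (inv_lt_one_of_one_lt₀ hσ) fun k => ?_
  have h := mul_sq_norm_le_of_minimizes_l0_add_sq D hlam (hv k)
  rw [show u (k + 1) - v (k + 1) + q k = q (k + 1) by rw [hq]; abel, hη] at h
  have hσk : 0 < σ ^ k := by positivity
  rw [inv_pow, ← div_eq_mul_inv, div_div, le_div_iff₀ (by positivity)]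
  linarith

theorem two_mul_norm_sub_le_norm_residual_add {E : Type*} [NormedAddCommGroup E] [NormedSpace ℝ E]
    {u u' v w q₁ q₂ p₁ p₂ : E} (h₁ : q₁ = p₁ + u - v) (h₂ : q₂ = p₂ + u - w) :
    2 * ‖u' - u‖ ≤ ‖(u' - v + q₁) + (u' - w + q₂)‖ + (2 * ‖q₁‖ + ‖p₁‖) + (2 * ‖q₂‖ + ‖p₂‖) := by
  have hsplit : (2 : ℝ) • (u' - u) =
      ((u' - v + q₁) + (u' - w + q₂)) - ((q₁ + q₁) - p₁) - ((q₂ + q₂) - p₂) := by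
    rw [two_smul, h₁, h₂]; abel
  have hq (q p : E) : ‖(q + q) - p‖ ≤ 2 * ‖q‖ + ‖p‖ := by
    linarith [norm_sub_le (q + q) p, norm_add_le q q]
  calc 2 * ‖u' - u‖ = ‖(2 : ℝ) • (u' - u)‖ := by rw [norm_smul, Real.norm_two]
    _ ≤ _ := by
      rw [hsplit]
      linarith [norm_sub_le (((u' - v + q₁) + (u' - w + q₂)) - ((q₁ + q₁) - p₁)) ((q₂ + q₂) - p₂),
        norm_sub_le ((u' - v + q₁) + (u' - w + q₂)) ((q₁ + q₁) - p₁), hq q₁ p₁, hq q₂ p₂]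

theorem norm_sub_le_of_mul_norm_residual_le {E : Type*} [NormedAddCommGroup E]
    [NormedSpace ℝ E] {u u' v w q₁ q₂ p₁ p₂ : E} {c C : ℝ} (hc : 0 < c)
    (hres : c * ‖(u' - v + q₁) + (u' - w + q₂)‖ ≤ C * (‖u'‖ + 1))
    (h₁ : q₁ = p₁ + u - v) (h₂ : q₂ = p₂ + u - w) :
    ‖u' - u‖ ≤ C * c⁻¹ * (‖u'‖ + 1) + ((2 * ‖q₁‖ + ‖p₁‖) + (2 * ‖q₂‖ + ‖p₂‖)) := by
  have hres' := (le_div_iff₀' hc).mpr hres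
  rw [div_eq_mul_inv, mul_right_comm] at hres'
  linarith [two_mul_norm_sub_le_norm_residual_add (u' := u') h₁ h₂, norm_nonneg (u' - u)]

theorem tendsto_of_multiplier_update {E : Type*} [NormedAddCommGroup E] {u v q : ℕ → E} {x : E}
    (hu : Tendsto u atTop (𝓝 x)) (hq : Tendsto q atTop (𝓝 0))
    (hupd : ∀ k, q (k + 1) = q k + u (k + 1) - v (k + 1)) : Tendsto v atTop (𝓝 x) := by
  have hv : (fun k => v (k + 1)) = fun k => q k + u (k + 1) - q (k + 1) := by
    ext k; rw [hupd]; abel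
  rw [← tendsto_add_atTop_iff_nat 1, hv]
  simpa using (hq.add (hu.comp (tendsto_add_atTop_nat 1))).sub (hq.comp (tendsto_add_atTop_nat 1))

theorem stmt12_general {N n d : ℕ}
    (F : EuclideanSpace ℝ (Fin N) → EReal)
    (hbot : ∀ x, F x ≠ ⊥) (hproper : ∃ x, F x ≠ ⊤)
    (hconv : ∀ (x y : EuclideanSpace ℝ (Fin N)) (t : ℝ), 0 ≤ t → t ≤ 1 →
      F (t • x + (1 - t) • y) ≤ ((t : EReal)) * F x + (((1 - t : ℝ) : EReal)) * F y)
    (hgrowth : ∃ C : ℝ, ∀ (x xs : EuclideanSpace ℝ (Fin N)),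
      (∀ v, F x + (((inner ℝ xs (v - x) : ℝ)) : EReal) ≤ F v) → ‖xs‖ ≤ C * (‖x‖ + 1))
    (D1 D2 : EuclideanSpace ℝ (Fin N) →ₗ[ℝ] (Fin n → Fin d → ℝ))
    (lam η₀ σ : ℝ) (hlam : 0 < lam) (hη₀ : 0 < η₀) (hσ : 1 < σ)
    (η : ℕ → ℝ) (hη : ∀ k, η k = η₀ * σ ^ k)
    (u v w q1 q2 : ℕ → EuclideanSpace ℝ (Fin N))
    (hu : ∀ k, ∀ x : EuclideanSpace ℝ (Fin N),
      F (u (k + 1)) + ((η k / 2 * (‖u (k + 1) - v k + q1 k‖ ^ 2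
          + ‖u (k + 1) - w k + q2 k‖ ^ 2) : ℝ) : EReal) ≤
        F x + ((η k / 2 * (‖x - v k + q1 k‖ ^ 2 + ‖x - w k + q2 k‖ ^ 2) : ℝ) : EReal))
    (hv : ∀ k, ∀ x : EuclideanSpace ℝ (Fin N),
      lam * l0 (D1 (v (k + 1))) + η k / 2 * ‖u (k + 1) - v (k + 1) + q1 k‖ ^ 2 ≤
        lam * l0 (D1 x) + η k / 2 * ‖u (k + 1) - x + q1 k‖ ^ 2)
    (hw : ∀ k, ∀ x : EuclideanSpace ℝ (Fin N),
      lam * l0 (D2 (w (k + 1))) + η k / 2 * ‖u (k + 1) - w (k + 1) + q2 k‖ ^ 2 ≤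
        lam * l0 (D2 x) + η k / 2 * ‖u (k + 1) - x + q2 k‖ ^ 2)
    (hq1 : ∀ k, q1 (k + 1) = q1 k + u (k + 1) - v (k + 1))
    (hq2 : ∀ k, q2 (k + 1) = q2 k + u (k + 1) - w (k + 1)) :
    ∃ uh : EuclideanSpace ℝ (Fin N),
      Tendsto u atTop (nhds uh) ∧ Tendsto v atTop (nhds uh) ∧ Tendsto w atTop (nhds uh) ∧
        Tendsto q1 atTop (nhds 0) ∧ Tendsto q2 atTop (nhds 0) := by
  obtain ⟨C, hC⟩ := hgrowth
  have hη_pos (k : ℕ) : 0 < η k := by rw [hη]; positivity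
  have hresidual (k : ℕ) : η k * ‖(u (k + 1) - v k + q1 k) + (u (k + 1) - w k + q2 k)‖ ≤
      C * (‖u (k + 1)‖ + 1) := by
    simpa only [sub_add] using mul_norm_add_le_of_minimizes_add_sq hbot hproper hconv hC
      (hη_pos k).le (by simpa only [sub_add] using hu k)
  have hC₀ : 0 ≤ C := nonneg_of_mul_nonneg_left
    ((mul_nonneg (hη_pos 0).le (norm_nonneg _)).trans (hresidual 0)) (by positivity)
  have hq1_sum := summable_norm_multiplier_of_minimizes_l0_add_sq D1 hlam.le hη₀ hσ hη hv hq1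
  have hq2_sum := summable_norm_multiplier_of_minimizes_l0_add_sq D2 hlam.le hη₀ hσ hη hw hq2
  have hη_inv_sum : Summable fun k => C * (η (k + 1))⁻¹ := by
    simp only [hη]
    exact ((summable_nat_add_iff 1).mpr (summable_inv_mul_pow η₀ hσ)).mul_left C
  have hstep (k : ℕ) := norm_sub_le_of_mul_norm_residual_le (hη_pos (k + 1)) (hresidual (k + 1))
    (hq1 k) (hq2 k)
  have hq_sum : Summable fun k => (2 * ‖q1 (k + 1)‖ + ‖q1 k‖) + (2 * ‖q2 (k + 1)‖ + ‖q2 k‖) :=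
    ((((summable_nat_add_iff 1).mpr hq1_sum).mul_left 2).add hq1_sum).add
      ((((summable_nat_add_iff 1).mpr hq2_sum).mul_left 2).add hq2_sum)
  obtain ⟨uh, huh⟩ := cauchySeq_tendsto_of_complete <|
    cauchySeq_of_norm_sub_le_mul_norm_add (x := fun k => u (k + 1))
      (fun k => by have := hη_pos (k + 1); positivity) (fun k => by positivity) hη_inv_sum
      hq_sum hstep
  rw [tendsto_add_atTop_iff_nat 1] at huh
  have hq1_lim := tendsto_zero_iff_norm_tendsto_zero.mpr hq1_sum.tendsto_atTop_zero
  have hq2_lim := tendsto_zero_iff_norm_tendsto_zero.mpr hq2_sum.tendsto_atTop_zero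
  exact ⟨uh, huh, tendsto_of_multiplier_update huh hq1_lim hq1,
    tendsto_of_multiplier_update huh hq2_lim hq2, hq1_lim, hq2_lim⟩

/-- Convergence of the ADMM-like algorithm for a proper, closed, convex F with
subgradient growth condition (Theorem 4.1). -/
theorem stmt12 {N n d : ℕ}
    (F : EuclideanSpace ℝ (Fin N) → EReal)
    (hbot : ∀ x, F x ≠ ⊥) (hproper : ∃ x, F x ≠ ⊤)
    (hlsc : LowerSemicontinuous F)
    (hconv : ∀ (x y : EuclideanSpace ℝ (Fin N)) (t : ℝ), 0 ≤ t → t ≤ 1 →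
      F (t • x + (1 - t) • y) ≤ ((t : EReal)) * F x + (((1 - t : ℝ) : EReal)) * F y)
    (hgrowth : ∃ C : ℝ, ∀ (x xs : EuclideanSpace ℝ (Fin N)),
      (∀ v, F x + (((inner ℝ xs (v - x) : ℝ)) : EReal) ≤ F v) → ‖xs‖ ≤ C * (‖x‖ + 1))
    (D1 D2 : EuclideanSpace ℝ (Fin N) →ₗ[ℝ] (Fin n → Fin d → ℝ))
    (lam η₀ σ : ℝ) (hlam : 0 < lam) (hη₀ : 0 < η₀) (hσ : 1 < σ)
    (η : ℕ → ℝ) (hη : ∀ k, η k = η₀ * σ ^ k)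
    (u v w q1 q2 : ℕ → EuclideanSpace ℝ (Fin N))
    (hu : ∀ k, ∀ x : EuclideanSpace ℝ (Fin N),
      F (u (k + 1)) + ((η k / 2 * (‖u (k + 1) - v k + q1 k‖ ^ 2
          + ‖u (k + 1) - w k + q2 k‖ ^ 2) : ℝ) : EReal) ≤
        F x + ((η k / 2 * (‖x - v k + q1 k‖ ^ 2 + ‖x - w k + q2 k‖ ^ 2) : ℝ) : EReal))
    (hv : ∀ k, ∀ x : EuclideanSpace ℝ (Fin N),
      lam * l0 (D1 (v (k + 1))) + η k / 2 * ‖u (k + 1) - v (k + 1) + q1 k‖ ^ 2 ≤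
        lam * l0 (D1 x) + η k / 2 * ‖u (k + 1) - x + q1 k‖ ^ 2)
    (hw : ∀ k, ∀ x : EuclideanSpace ℝ (Fin N),
      lam * l0 (D2 (w (k + 1))) + η k / 2 * ‖u (k + 1) - w (k + 1) + q2 k‖ ^ 2 ≤
        lam * l0 (D2 x) + η k / 2 * ‖u (k + 1) - x + q2 k‖ ^ 2)
    (hq1 : ∀ k, q1 (k + 1) = q1 k + u (k + 1) - v (k + 1))
    (hq2 : ∀ k, q2 (k + 1) = q2 k + u (k + 1) - w (k + 1)) :
    ∃ uh : EuclideanSpace ℝ (Fin N),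
      Tendsto u atTop (nhds uh) ∧ Tendsto v atTop (nhds uh) ∧ Tendsto w atTop (nhds uh) ∧
        Tendsto q1 atTop (nhds 0) ∧ Tendsto q2 atTop (nhds 0) :=
  stmt12_general F hbot hproper hconv hgrowth D1 D2 lam η₀ σ hlam hη₀ hσ η hη u v w q1 q2 hu hv hw
    hq1 hq2
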